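/- arXiv:2405.05684 — 3 statements merged into one kernel-verified Lean document; each statement's English description precedes it below -/
import Mathlib

section
/- Let φ be a Finsler norm on ℝ^d, ζ > 0, and let φ_ζ be the Minkowski gauge of E_ζ = {φ ≤ 1} + B̄_ζ(0). Then for every p ∈ ℝ^d \ {0}, one has ∂φ_ζ*(p) = ∂φ*(p) + ζp/‖p‖, where φ_ζ* is the dual norm of φ_ζ. -/
open scoped InnerProductSpace RealInnerProductSpace Pointwise

open Metric Bornology Topology

/-! `φ_ζ*` is the support function of `E_ζ = K + B̄_ζ(0)` with `K = {φ ≤ 1}` compact convex, so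
`φ_ζ* = φ* + ζ ‖·‖`. The subdifferential at `p` of the support function of a compact convex set
is the face of the set exposed by `p`, and the face of `K + B̄_ζ(0)` exposed by `p ≠ 0` is the face
of `K` exposed by `p`, translated by `ζ p / ‖p‖`, the unique maximiser of `⟪p, ·⟫` on the ball. -/

section Ball

variable {E : Type*} [NormedAddCommGroup E] [InnerProductSpace ℝ E] {p q : E} {r : ℝ}

lemma div_norm_smul_mem_closedBall (hr : 0 ≤ r) (p : E) : (r / ‖p‖) • p ∈ closedBall (0 : E) r := by
  rcases eq_or_ne p 0 with rfl | hp
  · simpa using hr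
  rw [mem_closedBall_zero_iff, norm_smul, Real.norm_of_nonneg (by positivity),
    div_mul_cancel₀ _ (norm_ne_zero_iff.mpr hp)]

lemma inner_div_norm_smul (r : ℝ) (p : E) : ⟪p, (r / ‖p‖) • p⟫_ℝ = r * ‖p‖ := by
  rcases eq_or_ne p 0 with rfl | hp
  · simp
  rw [real_inner_smul_right, real_inner_self_eq_norm_mul_norm]
  field_simp [norm_ne_zero_iff.mpr hp]

lemma eq_div_norm_smul_of_inner_eq (hp : p ≠ 0) (hq : q ∈ closedBall (0 : E) r)
    (h : ⟪p, q⟫_ℝ = r * ‖p‖) : q = (r / ‖p‖) • p := by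
  have hp' : 0 < ‖p‖ := norm_pos_iff.mpr hp
  rw [mem_closedBall_zero_iff] at hq
  have hnorm : ‖q‖ = r := by
    have := real_inner_le_norm p q
    nlinarith
  have hcs : ‖q‖ • p = ‖p‖ • q := inner_eq_norm_mul_iff_real.mp (by rw [h, hnorm, mul_comm])
  rw [← hnorm, div_eq_inv_mul, mul_smul, hcs, inv_smul_smul₀ hp'.ne']

end Ball

noncomputable def supportFunction {E : Type*} [NormedAddCommGroup E] [InnerProductSpace ℝ E]
    (C : Set E) (y : E) : ℝ :=
  sSup ((fun q => ⟪y, q⟫_ℝ) '' C)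

namespace supportFunction

variable {E : Type*} [NormedAddCommGroup E] [InnerProductSpace ℝ E] {C A B : Set E} {p q y : E}
  {r : ℝ}

lemma bddAbove_image_inner (hC : IsBounded C) (y : E) : BddAbove ((fun q => ⟪y, q⟫_ℝ) '' C) := by
  obtain ⟨R, hR⟩ := isBounded_iff_forall_norm_le.mp hC
  refine ⟨‖y‖ * R, ?_⟩
  rintro _ ⟨q, hq, rfl⟩
  exact (real_inner_le_norm y q).trans (mul_le_mul_of_nonneg_left (hR q hq) (norm_nonneg y))

lemma inner_le (hC : IsBounded C) (hq : q ∈ C) (y : E) : ⟪y, q⟫_ℝ ≤ supportFunction C y :=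
  le_csSup (bddAbove_image_inner hC y) ⟨q, hq, rfl⟩

lemma le_of_forall_inner_le (hC : C.Nonempty) {c : ℝ} (h : ∀ q ∈ C, ⟪y, q⟫_ℝ ≤ c) :
    supportFunction C y ≤ c :=
  csSup_le (hC.image _) (Set.forall_mem_image.mpr h)

lemma smul_right {c : ℝ} (hc : 0 ≤ c) (C : Set E) (y : E) :
    supportFunction C (c • y) = c * supportFunction C y := by
  have : (fun q => ⟪c • y, q⟫_ℝ) '' C = c • (fun q => ⟪y, q⟫_ℝ) '' C := by
    rw [← Set.image_smul, Set.image_image]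
    simp only [real_inner_smul_left, smul_eq_mul]
  rw [supportFunction, this, Real.sSup_smul_of_nonneg hc, smul_eq_mul, supportFunction]

lemma zero_right (C : Set E) : supportFunction C 0 = 0 := by
  simpa using smul_right le_rfl C (0 : E)

lemma add_left (hA : IsBounded A) (hA' : A.Nonempty) (hB : IsBounded B) (hB' : B.Nonempty) (y : E) :
    supportFunction (A + B) y = supportFunction A y + supportFunction B y := by
  have himage := Set.image_add (innerₛₗ ℝ y) (s := A) (t := B)
  rw [coe_innerₛₗ_apply] at himage
  rw [supportFunction, himage]
  exact csSup_add (hA'.image _) (bddAbove_image_inner hA y) (hB'.image _)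
    (bddAbove_image_inner hB y)

lemma mem_of_forall_inner_le [CompleteSpace E] (hCc : IsClosed C) (hCv : Convex ℝ C)
    (hC : C.Nonempty) (h : ∀ y, ⟪y, q⟫_ℝ ≤ supportFunction C y) : q ∈ C := by
  by_contra hq
  obtain ⟨f, u, hfC, hfq⟩ := geometric_hahn_banach_closed_point hCv hCc hq
  set v := (InnerProductSpace.toDual ℝ E).symm f
  have hv : ∀ x, ⟪v, x⟫_ℝ = f x := fun x => InnerProductSpace.toDual_symm_apply
  have : supportFunction C v ≤ u :=
    le_of_forall_inner_le hC fun x hx => (hv x ▸ hfC x hx).le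
  linarith [h v, hv q]

lemma hasSubgradient_iff [CompleteSpace E] (hCc : IsClosed C) (hCv : Convex ℝ C) (hC : C.Nonempty)
    (hCb : IsBounded C) :
    (∀ y, supportFunction C p + ⟪q, y - p⟫_ℝ ≤ supportFunction C y) ↔
      q ∈ C ∧ ⟪p, q⟫_ℝ = supportFunction C p := by
  constructor
  · intro hq
    have hle := hq 0
    have hge := hq ((2 : ℝ) • p)
    rw [zero_right, zero_sub, inner_neg_right] at hle
    rw [smul_right two_pos.le, two_smul, add_sub_cancel_right] at hge
    -- testing at `y = 0` and `y = 2 • p` pins down `⟪q, p⟫` by positive homogeneity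
    have hqp : ⟪p, q⟫_ℝ = supportFunction C p := by
      rw [real_inner_comm]; linarith
    refine ⟨mem_of_forall_inner_le hCc hCv hC fun y => ?_, hqp⟩
    linarith [hq y, inner_sub_right (𝕜 := ℝ) q y p, real_inner_comm p q, real_inner_comm y q]
  · rintro ⟨hqC, hqp⟩ y
    linarith [inner_le hCb hqC y, inner_sub_right (𝕜 := ℝ) q y p, real_inner_comm p q,
      real_inner_comm y q]

lemma closedBall_zero (hr : 0 ≤ r) (y : E) :
    supportFunction (closedBall 0 r) y = r * ‖y‖ := by
  refine le_antisymm (le_of_forall_inner_le (nonempty_closedBall.mpr hr) fun b hb => ?_) ?_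
  · rw [mem_closedBall_zero_iff] at hb
    calc ⟪y, b⟫_ℝ ≤ ‖y‖ * ‖b‖ := real_inner_le_norm y b
      _ ≤ ‖y‖ * r := mul_le_mul_of_nonneg_left hb (norm_nonneg y)
      _ = r * ‖y‖ := mul_comm _ _
  · rw [← inner_div_norm_smul]
    exact inner_le isBounded_closedBall (div_norm_smul_mem_closedBall hr y) y

lemma mem_add_closedBall_and_inner_eq_iff (hA : IsBounded A) (hA' : A.Nonempty) (hp : p ≠ 0)
    (hr : 0 ≤ r) :
    q ∈ A + closedBall 0 r ∧ ⟪p, q⟫_ℝ = supportFunction (A + closedBall 0 r) p ↔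
      ∃ a, (a ∈ A ∧ ⟪p, a⟫_ℝ = supportFunction A p) ∧ q = a + (r / ‖p‖) • p := by
  rw [add_left hA hA' isBounded_closedBall (nonempty_closedBall.mpr hr), closedBall_zero hr]
  constructor
  · rintro ⟨⟨a, ha, b, hb, rfl⟩, hab⟩
    have hpa := inner_le hA ha p
    have hpb := closedBall_zero hr p ▸ inner_le isBounded_closedBall hb p
    rw [inner_add_right] at hab
    exact ⟨a, ⟨ha, by linarith⟩, by rw [eq_div_norm_smul_of_inner_eq hp hb (by linarith)]⟩
  · rintro ⟨a, ⟨ha, hpa⟩, rfl⟩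
    exact ⟨Set.add_mem_add ha (div_norm_smul_mem_closedBall hr p),
      by rw [inner_add_right, hpa, inner_div_norm_smul]⟩

end supportFunction

lemma IsClosed.setOf_gauge_le_one_eq {E : Type*} [AddCommGroup E] [Module ℝ E] [TopologicalSpace E]
    [IsTopologicalAddGroup E] [ContinuousSMul ℝ E] {s : Set E} (hs : IsClosed s)
    (hc : Convex ℝ s) (hs₀ : s ∈ 𝓝 0) : {x | gauge s x ≤ 1} = s := by
  ext x
  rw [Set.mem_ofPred_eq, gauge_le_one_iff_mem_closure hc hs₀, hs.closure_eq]

section PositivelyHomogeneous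

variable {E : Type*} [NormedAddCommGroup E] [NormedSpace ℝ E] {φ : E → ℝ}

lemma map_zero_of_pos_homogeneous (hhom : ∀ c : ℝ, 0 < c → ∀ x, φ (c • x) = c * φ x) :
    φ 0 = 0 := by
  have := hhom 2 two_pos 0
  rw [smul_zero] at this
  linarith

lemma exists_pos_mul_norm_le_of_pos_homogeneous [FiniteDimensional ℝ E] (hcont : Continuous φ)
    (hhom : ∀ c : ℝ, 0 < c → ∀ x, φ (c • x) = c * φ x) (hpos : ∀ x, x ≠ 0 → 0 < φ x) :
    ∃ m > 0, ∀ x, m * ‖x‖ ≤ φ x := by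
  rcases subsingleton_or_nontrivial E with hE | hE
  · refine ⟨1, one_pos, fun x => ?_⟩
    rw [Subsingleton.elim x 0, norm_zero, map_zero_of_pos_homogeneous hhom, mul_zero]
  obtain ⟨z, hz, hmin⟩ := (isCompact_sphere (0 : E) 1).exists_isMinOn
    (NormedSpace.sphere_nonempty.mpr zero_le_one) hcont.continuousOn
  refine ⟨φ z, hpos z (ne_zero_of_mem_unit_sphere ⟨z, hz⟩), fun x => ?_⟩
  rcases eq_or_ne x 0 with rfl | hx
  · rw [norm_zero, mul_zero, map_zero_of_pos_homogeneous hhom]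
  have hx' : 0 < ‖x‖ := norm_pos_iff.mpr hx
  have hunit : ‖x‖⁻¹ • x ∈ sphere (0 : E) 1 := by
    rw [mem_sphere_zero_iff_norm, norm_smul, norm_inv, norm_norm, inv_mul_cancel₀ hx'.ne']
  calc φ z * ‖x‖ ≤ φ (‖x‖⁻¹ • x) * ‖x‖ := mul_le_mul_of_nonneg_right (hmin hunit) hx'.le
    _ = φ x := by rw [hhom _ (inv_pos.mpr hx'), mul_comm, ← mul_assoc, mul_inv_cancel₀ hx'.ne',
      one_mul]

lemma isCompact_setOf_le_one_of_pos_homogeneous [FiniteDimensional ℝ E] (hcont : Continuous φ)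
    (hhom : ∀ c : ℝ, 0 < c → ∀ x, φ (c • x) = c * φ x) (hpos : ∀ x, x ≠ 0 → 0 < φ x) :
    IsCompact {x | φ x ≤ 1} := by
  obtain ⟨m, hm, hle⟩ := exists_pos_mul_norm_le_of_pos_homogeneous hcont hhom hpos
  refine isCompact_of_isClosed_isBounded (isClosed_le hcont continuous_const) ?_
  refine isBounded_iff_forall_norm_le.mpr ⟨1 / m, fun x hx => ?_⟩
  rw [le_div_iff₀' hm]
  exact (hle x).trans hx

end PositivelyHomogeneous

theorem finsler_regularized_dual_subdifferential_general (d : ℕ)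
    (φ : EuclideanSpace ℝ (Fin d) → ℝ)
    (hconv : ConvexOn ℝ Set.univ φ)
    (hhom : ∀ c : ℝ, 0 < c → ∀ x, φ (c • x) = c * φ x)
    (hpos : ∀ x, x ≠ 0 → 0 < φ x)
    (φs : EuclideanSpace ℝ (Fin d) → ℝ)
    (hφs : ∀ p, φs p = sSup ((fun q => ⟪p, q⟫_ℝ) '' {q | φ q ≤ 1}))
    (ζ : ℝ) (hζ : 0 < ζ)
    (φζ : EuclideanSpace ℝ (Fin d) → ℝ)
    (hφζ : φζ = gauge ({x | φ x ≤ 1} + Metric.closedBall (0 : EuclideanSpace ℝ (Fin d)) ζ))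
    (φζs : EuclideanSpace ℝ (Fin d) → ℝ)
    (hφζs : ∀ p, φζs p = sSup ((fun q => ⟪p, q⟫_ℝ) '' {q | φζ q ≤ 1}))
    (p : EuclideanSpace ℝ (Fin d)) (hp : p ≠ 0) :
    {q | ∀ y, φζs p + ⟪q, y - p⟫_ℝ ≤ φζs y}
      = {q | ∃ a, (∀ y, φs p + ⟪a, y - p⟫_ℝ ≤ φs y) ∧ q = a + (ζ / ‖p‖) • p} := by
  set K : Set (EuclideanSpace ℝ (Fin d)) := {x | φ x ≤ 1}
  have hcont : Continuous φ := continuousOn_univ.mp (hconv.continuousOn isOpen_univ)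
  have hKc : IsCompact K := isCompact_setOf_le_one_of_pos_homogeneous hcont hhom hpos
  have hKv : Convex ℝ K := by simpa using hconv.convex_le 1
  have hK0 : (0 : EuclideanSpace ℝ (Fin d)) ∈ K := by
    simp [K, map_zero_of_pos_homogeneous hhom]
  have hEc : IsCompact (K + closedBall 0 ζ) := hKc.add (isCompact_closedBall 0 ζ)
  have hEv : Convex ℝ (K + closedBall 0 ζ) := hKv.add (convex_closedBall 0 ζ)
  have hE0 : K + closedBall 0 ζ ∈ 𝓝 0 :=
    Filter.mem_of_superset (closedBall_mem_nhds 0 hζ) (Set.subset_add_right _ hK0)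
  have hφs' : φs = supportFunction K := funext hφs
  have hφζs' : φζs = supportFunction (K + closedBall 0 ζ) := by
    funext y
    rw [hφζs, hφζ, hEc.isClosed.setOf_gauge_le_one_eq hEv hE0, supportFunction]
  ext q
  rw [hφs', hφζs', Set.mem_ofPred_eq, Set.mem_ofPred_eq,
    supportFunction.hasSubgradient_iff hEc.isClosed hEv
      (Set.Nonempty.add ⟨0, hK0⟩ (nonempty_closedBall.mpr hζ.le)) hEc.isBounded,
    supportFunction.mem_add_closedBall_and_inner_eq_iff hKc.isBounded ⟨0, hK0⟩ hp hζ.le]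
  simp only [supportFunction.hasSubgradient_iff hKc.isClosed hKv ⟨0, hK0⟩ hKc.isBounded]

/-- For the Minkowski gauge φ_ζ of E_ζ = {φ ≤ 1} + B̄_ζ(0) one has
    ∂φ_ζ*(p) = ∂φ*(p) + ζ p/‖p‖ for every p ≠ 0. -/
theorem finsler_regularized_dual_subdifferential (d : ℕ)
    (φ : EuclideanSpace ℝ (Fin d) → ℝ)
    (hnonneg : ∀ x, 0 ≤ φ x)
    (hconv : ConvexOn ℝ Set.univ φ)
    (hhom : ∀ c : ℝ, 0 < c → ∀ x, φ (c • x) = c * φ x)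
    (hpos : ∀ x, x ≠ 0 → 0 < φ x)
    (φs : EuclideanSpace ℝ (Fin d) → ℝ)
    (hφs : ∀ p, φs p = sSup ((fun q => ⟪p, q⟫_ℝ) '' {q | φ q ≤ 1}))
    (ζ : ℝ) (hζ : 0 < ζ)
    (φζ : EuclideanSpace ℝ (Fin d) → ℝ)
    (hφζ : φζ = gauge ({x | φ x ≤ 1} + Metric.closedBall (0 : EuclideanSpace ℝ (Fin d)) ζ))
    (φζs : EuclideanSpace ℝ (Fin d) → ℝ)
    (hφζs : ∀ p, φζs p = sSup ((fun q => ⟪p, q⟫_ℝ) '' {q | φζ q ≤ 1}))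
    (p : EuclideanSpace ℝ (Fin d)) (hp : p ≠ 0) :
    {q | ∀ y, φζs p + ⟪q, y - p⟫_ℝ ≤ φζs y}
      = {q | ∃ a, (∀ y, φs p + ⟪a, y - p⟫_ℝ ≤ φs y) ∧ q = a + (ζ / ‖p‖) • p} :=
  finsler_regularized_dual_subdifferential_general d φ hconv hhom hpos φs hφs ζ hζ φζ hφζ φζs hφζs p
    hp
end

section
/- Let C ⊆ ℝ^m be convex, x ∈ C, p ∈ N_C(x). Suppose (x_n, p_n) is a sequence in C × (ℝ^m \ {p}) with p_n ∈ N_C(x_n), (x_n, p_n) → (x, p), and (p_n − p)/‖p_n − p‖ → w. Then ⟨w, x⟩ = max{⟨w, y⟩ : y ∈ C and p ∈ N_C(y)}. -/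
open scoped InnerProductSpace RealInnerProductSpace

/-! The normal cone map is monotone: `⟪pₙ - p, y - xₙ⟫ ≤ 0` whenever `pₙ` is normal at `xₙ` and `p`
is normal at `y`. Dividing by `‖pₙ - p‖` and passing to the limit gives `⟪w, y - x⟫ ≤ 0`. -/

theorem inner_sub_sub_nonpos_of_normal {E : Type*} [NormedAddCommGroup E] [InnerProductSpace ℝ E]
    {C : Set E} {p q a b : E} (ha : a ∈ C) (hb : b ∈ C)
    (hq : ∀ z ∈ C, ⟪q, z⟫_ℝ ≤ ⟪q, a⟫_ℝ) (hp : ∀ z ∈ C, ⟪p, z⟫_ℝ ≤ ⟪p, b⟫_ℝ) :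
    ⟪q - p, b - a⟫_ℝ ≤ 0 := by
  have hqb := hq b hb
  have hpa := hp a ha
  rw [inner_sub_left, inner_sub_right, inner_sub_right]
  linarith

theorem normal_cone_direction_of_approach_general (m : ℕ)
    (C : Set (EuclideanSpace ℝ (Fin m)))
    (x p : EuclideanSpace ℝ (Fin m)) (hx : x ∈ C)
    (hp : ∀ y ∈ C, ⟪p, y⟫_ℝ ≤ ⟪p, x⟫_ℝ)
    (xn pn : ℕ → EuclideanSpace ℝ (Fin m))
    (w : EuclideanSpace ℝ (Fin m))
    (hmem : ∀ n, xn n ∈ C)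
    (hnormal : ∀ n, ∀ y ∈ C, ⟪pn n, y⟫_ℝ ≤ ⟪pn n, xn n⟫_ℝ)
    (hxlim : Filter.Tendsto xn Filter.atTop (nhds x))
    (hwlim : Filter.Tendsto (fun n => ‖pn n - p‖⁻¹ • (pn n - p)) Filter.atTop (nhds w)) :
    IsGreatest {r : ℝ | ∃ y ∈ C, (∀ z ∈ C, ⟪p, z⟫_ℝ ≤ ⟪p, y⟫_ℝ) ∧ r = ⟪w, y⟫_ℝ}
      ⟪w, x⟫_ℝ := by
  refine ⟨⟨x, hx, hp, rfl⟩, ?_⟩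
  rintro r ⟨y, hy, hpy, rfl⟩
  have hmono (n : ℕ) : ⟪‖pn n - p‖⁻¹ • (pn n - p), y - xn n⟫_ℝ ≤ 0 := by
    rw [real_inner_smul_left]
    exact mul_nonpos_of_nonneg_of_nonpos (by positivity)
      (inner_sub_sub_nonpos_of_normal (hmem n) hy (hnormal n) hpy)
  have hlim : ⟪w, y - x⟫_ℝ ≤ 0 :=
    le_of_tendsto' (hwlim.inner (tendsto_const_nhds.sub hxlim)) hmono
  rw [inner_sub_right] at hlim
  linarith

/-- Direction of approach lemma: if p_n ∈ N_C(x_n), (x_n,p_n) → (x,p) with p_n ≠ p,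
    and (p_n − p)/‖p_n − p‖ → w, then ⟨w,x⟩ = max{⟨w,y⟩ : y ∈ C, p ∈ N_C(y)}. -/
theorem normal_cone_direction_of_approach (m : ℕ)
    (C : Set (EuclideanSpace ℝ (Fin m))) (hC : Convex ℝ C)
    (x p : EuclideanSpace ℝ (Fin m)) (hx : x ∈ C)
    (hp : ∀ y ∈ C, ⟪p, y⟫_ℝ ≤ ⟪p, x⟫_ℝ)
    (xn pn : ℕ → EuclideanSpace ℝ (Fin m))
    (w : EuclideanSpace ℝ (Fin m))
    (hmem : ∀ n, xn n ∈ C)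
    (hne : ∀ n, pn n ≠ p)
    (hnormal : ∀ n, ∀ y ∈ C, ⟪pn n, y⟫_ℝ ≤ ⟪pn n, xn n⟫_ℝ)
    (hxlim : Filter.Tendsto xn Filter.atTop (nhds x))
    (hplim : Filter.Tendsto pn Filter.atTop (nhds p))
    (hwlim : Filter.Tendsto (fun n => ‖pn n - p‖⁻¹ • (pn n - p)) Filter.atTop (nhds w)) :
    IsGreatest {r : ℝ | ∃ y ∈ C, (∀ z ∈ C, ⟪p, z⟫_ℝ ≤ ⟪p, y⟫_ℝ) ∧ r = ⟪w, y⟫_ℝ}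
      ⟪w, x⟫_ℝ :=
  normal_cone_direction_of_approach_general m C x p hx hp xn pn w hmem hnormal hxlim hwlim
end

section
/- Let N ⊆ ℝ^m be a closed convex cone, μ a finite positive Borel measure on N with ∫‖v‖ dμ(v) < ∞, and N' a face of N. If the mean ∫ v dμ(v) belongs to N', then μ is supported on N', i.e. μ(N \ N') = 0. -/
/-!
Let `K` be the closed convex hull of the support of `μ`; it lies in `N` and carries `μ`. The
barycenter `β = ⨍ v ∂μ` lies in `K`, and in fact in its relative interior: otherwise a linear
functional `g` supporting `K` at `β` within the affine span of `K` satisfies `g ≤ g β` on `K`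
with equality on average, hence `μ`-a.e., so `K` lies in the hyperplane `{g = g β}`,
contradicting the choice of `g`. Since `β` is a positive multiple of the mean, it lies in the
face `N'`, which therefore contains all of `K`, and in particular the support of `μ`.
-/

open MeasureTheory Set

section Convex

variable {F : Type*} [NormedAddCommGroup F] [NormedSpace ℝ F]

theorem openSegment_subset_intrinsicInterior_segment (a b : F) :
    openSegment ℝ a b ⊆ intrinsicInterior ℝ (segment ℝ a b) := by
  rcases eq_or_ne a b with rfl | hab
  · simp
  set L := ‖b - a‖
  have hL : 0 < L := norm_pos_iff.2 (sub_ne_zero.2 hab.symm)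
  set u := L⁻¹ • (b - a)
  have hu : ‖u‖ = 1 := by simp [u, norm_smul, L, hL.ne']
  let ψ : ℝ →ᵃⁱ[ℝ] F := (AffineIsometryEquiv.constVAdd ℝ F a).toAffineIsometry.comp
    (⟨LinearMap.toSpanSingleton ℝ F u, fun t => by simp [norm_smul, hu]⟩ :
      ℝ →ₗᵢ[ℝ] F).toAffineIsometry
  have himage (s : Set ℝ) : (fun θ : ℝ => a + θ • (b - a)) '' s = ψ '' ((· * L) '' s) := by
    rw [image_image]
    refine image_congr fun θ _ => ?_
    simp [ψ, u, smul_smul, hL.ne']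
  rw [openSegment_eq_image', segment_eq_image', himage, himage, image_mul_right_Ioo _ _ hL,
    image_mul_right_Icc zero_le_one hL.le, ψ.intrinsicInterior_image, ← interior_Icc]
  exact image_mono interior_subset_intrinsicInterior

theorem smul_mem_of_face_of_cone {N N' : Set F} (hNconv : Convex ℝ N)
    (hNcone : ∀ x ∈ N, ∀ c : ℝ, 0 ≤ c → c • x ∈ N) (hN'sub : N' ⊆ N)
    (hface : ∀ S : Set F, Convex ℝ S → S ⊆ N → (intrinsicInterior ℝ S ∩ N').Nonempty → S ⊆ N')
    {x : F} (hx : x ∈ N') {c : ℝ} (hc : 0 < c) : c • x ∈ N' := by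
  have hxN := hN'sub hx
  have hc1 : 0 < c + 1 := by linarith
  have hseg : segment ℝ 0 ((c + 1) • x) ⊆ N :=
    hNconv.segment_subset (by simpa using hNcone x hxN 0 le_rfl) (hNcone x hxN _ hc1.le)
  refine hface _ (convex_segment _ _) hseg
    ⟨x, openSegment_subset_intrinsicInterior_segment _ _ ?_, hx⟩ ?_
  · refine ⟨c / (c + 1), 1 / (c + 1), by positivity, by positivity, by field_simp, ?_⟩
    rw [smul_zero, zero_add, smul_smul, one_div, inv_mul_cancel₀ hc1.ne', one_smul]
  · refine ⟨1 / (c + 1), c / (c + 1), by positivity, by positivity, by field_simp; ring, ?_⟩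
    rw [smul_zero, zero_add, smul_smul, div_mul_cancel₀ _ hc1.ne']

theorem Convex.exists_forall_le_lt_of_notMem_interior {K : Set F} (hK : Convex ℝ K)
    (hne : (interior K).Nonempty) {x : F} (hx : x ∉ interior K) :
    ∃ f : StrongDual ℝ F, (∀ y ∈ K, f y ≤ f x) ∧ ∃ y ∈ K, f y < f x := by
  obtain ⟨f, hf⟩ := geometric_hahn_banach_open_point hK.interior isOpen_interior hx
  have hle : closure (interior K) ⊆ {y | f y ≤ f x} :=
    closure_minimal (fun y hy => (hf y hy).le) (isClosed_le f.continuous continuous_const)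
  obtain ⟨z, hz⟩ := hne
  refine ⟨f, fun y hy => hle ?_, z, interior_subset hz, hf z hz⟩
  rw [hK.closure_interior_eq_closure_of_nonempty_interior ⟨z, hz⟩]
  exact subset_closure hy

/-- Transport to the direction `V` of the affine span of `K`, based at `x`, where the relative
interior becomes the interior; separate there and extend the functional by Hahn–Banach. -/
theorem Convex.exists_forall_le_lt_of_notMem_intrinsicInterior [FiniteDimensional ℝ F]
    {K : Set F} (hK : Convex ℝ K) {x : F} (hxK : x ∈ K) (hx : x ∉ intrinsicInterior ℝ K) :
    ∃ g : StrongDual ℝ F, (∀ y ∈ K, g y ≤ g x) ∧ ∃ y ∈ K, g y < g x := by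
  set V := (affineSpan ℝ K).direction
  let ψ : V →ᵃⁱ[ℝ] F :=
    (AffineIsometryEquiv.constVAdd ℝ F x).toAffineIsometry.comp V.subtypeₗᵢ.toAffineIsometry
  have hψ (w : V) : ψ w = x + w := rfl
  have hdir {y : F} (hy : y ∈ K) : y - x ∈ V :=
    AffineSubspace.vsub_mem_direction (subset_affineSpan ℝ K hy) (subset_affineSpan ℝ K hxK)
  set K₀ := ψ ⁻¹' K
  have hK₀ : Convex ℝ K₀ := hK.affine_preimage ψ.toAffineMap
  have himage : ψ '' K₀ = K :=
    image_preimage_eq_of_subset fun y hy => ⟨⟨y - x, hdir hy⟩, by simp [hψ]⟩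
  have hspan : affineSpan ℝ K₀ = ⊤ := by
    refine eq_top_iff.2 fun w _ => ?_
    have hw : ψ w ∈ (affineSpan ℝ K₀).map ψ.toAffineMap := by
      rw [AffineSubspace.map_span, ψ.coe_toAffineMap, himage, hψ, add_comm]
      exact AffineSubspace.vadd_mem_of_mem_direction w.2 (subset_affineSpan ℝ K hxK)
    obtain ⟨v, hv, hvw⟩ := AffineSubspace.mem_map.1 hw
    rwa [ψ.injective hvw] at hv
  have h0 : (0 : V) ∉ interior K₀ := fun h0 => hx <| by
    rw [← himage, ψ.intrinsicInterior_image]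
    exact ⟨0, interior_subset_intrinsicInterior h0, by simp [hψ]⟩
  obtain ⟨f, hfle, z, hz, hzlt⟩ := hK₀.exists_forall_le_lt_of_notMem_interior
    (hK₀.interior_nonempty_iff_affineSpan_eq_top.2 hspan) h0
  obtain ⟨g, hg, -⟩ := exists_extension_norm_eq V f
  have hgψ (w : V) : g (ψ w) = g x + f w := by rw [hψ, map_add, hg]
  refine ⟨g, fun y hy => ?_, ψ z, hz, ?_⟩
  · have hle := hfle ⟨y - x, hdir hy⟩ (by simpa [K₀, hψ] using hy)
    have hgy := hgψ ⟨y - x, hdir hy⟩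
    rw [hψ, add_sub_cancel] at hgy
    rw [hgy]
    simpa using hle
  · rw [hgψ]
    simpa using hzlt

end Convex

section Measure

theorem ContinuousLinearMap.average_comp_comm {α E F : Type*} [MeasurableSpace α]
    {μ : Measure α} [NormedAddCommGroup E] [NormedSpace ℝ E] [CompleteSpace E]
    [NormedAddCommGroup F] [NormedSpace ℝ F] [CompleteSpace F]
    (L : E →L[ℝ] F) {f : α → E} (hf : Integrable f μ) :
    ⨍ x, L (f x) ∂μ = L (⨍ x, f x ∂μ) :=
  L.integral_comp_comm hf.to_average

theorem ae_eq_average_of_ae_le_average {α : Type*} [MeasurableSpace α] {μ : Measure α}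
    [IsFiniteMeasure μ] {f : α → ℝ} (hf : Integrable f μ) (hle : ∀ᵐ x ∂μ, f x ≤ ⨍ y, f y ∂μ) :
    ∀ᵐ x ∂μ, f x = ⨍ y, f y ∂μ := by
  have hzero := (integral_eq_zero_iff_of_nonneg_ae (hle.mono fun x hx => sub_nonneg.2 hx)
    ((integrable_const _).sub hf)).1 (integral_average_sub hf)
  filter_upwards [hzero] with x hx
  exact (sub_eq_zero.1 hx).symm

variable {E : Type*} [NormedAddCommGroup E] [NormedSpace ℝ E] [MeasurableSpace E]

theorem MeasureTheory.Measure.closure_convexHull_support_subset (μ : Measure E) {C : Set E}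
    (hC : Convex ℝ C) (hCclosed : IsClosed C) (hμC : C ∈ ae μ) :
    closure (convexHull ℝ μ.support) ⊆ C :=
  closure_minimal (convexHull_min (μ.support_subset_of_isClosed hCclosed hμC) hC) hCclosed

theorem average_mem_intrinsicInterior_closure_convexHull_support [FiniteDimensional ℝ E]
    [BorelSpace E] (μ : Measure E) [IsFiniteMeasure μ] [NeZero μ]
    (hint : Integrable (fun v => v) μ) :
    ⨍ v, v ∂μ ∈ intrinsicInterior ℝ (closure (convexHull ℝ μ.support)) := by
  set K := closure (convexHull ℝ μ.support)
  have hK : Convex ℝ K := (convex_convexHull ℝ _).closure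
  have hμK : ∀ᵐ v ∂μ, v ∈ K :=
    Filter.mem_of_superset μ.support_mem_ae (subset_closure.trans' (subset_convexHull ℝ _))
  by_contra hβ
  have hβK := hK.average_mem isClosed_closure hμK hint
  obtain ⟨g, hgle, y, hyK, hylt⟩ := hK.exists_forall_le_lt_of_notMem_intrinsicInterior hβK hβ
  rw [← g.average_comp_comm hint] at hgle hylt
  have hgae := ae_eq_average_of_ae_le_average (g.integrable_comp hint) (hμK.mono hgle)
  have hKg : K ⊆ {v | g v = ⨍ w, g w ∂μ} :=
    μ.closure_convexHull_support_subset ((convex_singleton _).linear_preimage g.toLinearMap)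
      (isClosed_eq g.continuous continuous_const) hgae
  exact hylt.ne (hKg hyK)

end Measure

theorem measure_mean_in_face_general (m : ℕ)
    (N N' : Set (EuclideanSpace ℝ (Fin m)))
    (hNconv : Convex ℝ N) (hNclosed : IsClosed N)
    (hNcone : ∀ x ∈ N, ∀ c : ℝ, 0 ≤ c → c • x ∈ N)
    (hN'sub : N' ⊆ N)
    (hface : ∀ F : Set (EuclideanSpace ℝ (Fin m)), Convex ℝ F → F ⊆ N →
      (intrinsicInterior ℝ F ∩ N').Nonempty → F ⊆ N')
    (μ : Measure (EuclideanSpace ℝ (Fin m))) [IsFiniteMeasure μ]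
    (hsupp : μ Nᶜ = 0)
    (hint : Integrable (fun v => v) μ)
    (hmean : (∫ v, v ∂μ) ∈ N') :
    μ (N \ N') = 0 := by
  rcases eq_zero_or_neZero μ with rfl | _
  · simp
  set K := closure (convexHull ℝ μ.support)
  have hKN : K ⊆ N := μ.closure_convexHull_support_subset hNconv hNclosed hsupp
  have hβ : ⨍ v, v ∂μ ∈ N' := by
    rw [average_eq]
    exact smul_mem_of_face_of_cone hNconv hNcone hN'sub hface hmean
      (inv_pos.2 measureReal_univ_pos)
  have hKN' : K ⊆ N' := hface K (convex_convexHull ℝ _).closure hKN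
    ⟨_, average_mem_intrinsicInterior_closure_convexHull_support μ hint, hβ⟩
  have hsub : N \ N' ⊆ μ.supportᶜ := fun v hv hvμ =>
    hv.2 (hKN' (subset_closure (subset_convexHull ℝ _ hvμ)))
  exact measure_mono_null hsub μ.measure_compl_support

/-- If μ is a finite positive measure on a closed convex cone N with integrable
    identity, N' is a face of N, and the mean of μ lies in N', then μ is supported
    on N'. -/
theorem measure_mean_in_face (m : ℕ)
    (N N' : Set (EuclideanSpace ℝ (Fin m)))
    (hNconv : Convex ℝ N) (hNclosed : IsClosed N)
    (hNcone : ∀ x ∈ N, ∀ c : ℝ, 0 ≤ c → c • x ∈ N)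
    (hN'sub : N' ⊆ N) (hN'conv : Convex ℝ N')
    (hface : ∀ F : Set (EuclideanSpace ℝ (Fin m)), Convex ℝ F → F ⊆ N →
      (intrinsicInterior ℝ F ∩ N').Nonempty → F ⊆ N')
    (μ : Measure (EuclideanSpace ℝ (Fin m))) [IsFiniteMeasure μ]
    (hsupp : μ Nᶜ = 0)
    (hint : Integrable (fun v => v) μ)
    (hmean : (∫ v, v ∂μ) ∈ N') :
    μ (N \ N') = 0 :=
  measure_mean_in_face_general m N N' hNconv hNclosed hNcone hN'sub hface μ hsupp hint hmean
end
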